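/- arXiv:1809.07523 — 9 statements merged into one kernel-verified Lean document; each statement's English description precedes it below -/
import Mathlib

section
/- Let K ⊆ ℝ be closed, d ∈ ℕ, and ℓ ∈ ℕ, with the assumption that ℓ is even unless K ⊆ [0,∞). If y = (y_n) is a K-moment sequence, then the subsequence ỹ defined by ỹ_k = y_{dk+ℓ} is a K̃-moment sequence, where K̃ = { x^d : x ∈ K }. -/
/-!
If `μ` represents `y` on `K`, then `ν = (x ↦ x ^ d)₊(x ^ ℓ • μ)` represents `k ↦ y (d * k + ℓ)`:
the parity assumption makes the density `x ^ ℓ` nonnegative on `K`, and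
`∫ t ^ k dν = ∫ x ^ ℓ (x ^ d) ^ k dμ = y (d * k + ℓ)`. The measure `ν` is carried by `K̃`, which is
Borel because `K`, being closed in `ℝ`, is σ-compact, and so is its continuous image.
-/

open MeasureTheory Set
open scoped NNReal

/-- `y` is a `K`-moment sequence: it admits a nonnegative representing Borel
measure supported in `K`. -/
def IsMomentSeqOn (K : Set ℝ) (y : ℕ → ℝ) : Prop :=
  ∃ μ : Measure ℝ, μ Kᶜ = 0 ∧
    ∀ n : ℕ, Integrable (fun x : ℝ => x ^ n) μ ∧ y n = ∫ x, x ^ n ∂μ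

section Topology

variable {X Y : Type*} [TopologicalSpace X] [TopologicalSpace Y]

theorem IsSigmaCompact.measurableSet [T2Space X] [MeasurableSpace X] [OpensMeasurableSpace X]
    {s : Set X} (hs : IsSigmaCompact s) : MeasurableSet s := by
  obtain ⟨C, hC, rfl⟩ := hs
  exact MeasurableSet.iUnion fun n => (hC n).measurableSet

theorem IsClosed.measurableSet_image [SigmaCompactSpace X] [T2Space Y] [MeasurableSpace Y]
    [OpensMeasurableSpace Y] {f : X → Y} (hf : Continuous f) {K : Set X} (hK : IsClosed K) :
    MeasurableSet (f '' K) :=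
  ((isSigmaCompact_univ.of_isClosed_subset hK (subset_univ K)).image hf).measurableSet

end Topology

namespace MeasureTheory.Measure

variable {α β E : Type*} [MeasurableSpace α] [MeasurableSpace β]
  [NormedAddCommGroup E] [NormedSpace ℝ E] {μ : Measure α} {f : α → β}

theorem map_compl_image_eq_zero (hf : Measurable f) {s : Set α} (hs : MeasurableSet (f '' s))
    (hμ : μ sᶜ = 0) : μ.map f (f '' s)ᶜ = 0 := by
  rw [map_apply hf hs.compl]
  exact measure_mono_null (fun x hx hxs => hx (mem_image_of_mem f hxs)) hμ

theorem integrable_map_withDensity_iff (hf : Measurable f) {w : α → ℝ≥0} (hw : Measurable w)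
    {φ : β → E} (hφ : StronglyMeasurable φ) :
    Integrable φ ((μ.withDensity fun x => w x).map f) ↔
      Integrable (fun x => w x • φ (f x)) μ := by
  rw [integrable_map_measure hφ.aestronglyMeasurable hf.aemeasurable,
    integrable_withDensity_iff_integrable_smul₀ hw.aemeasurable]
  rfl

theorem integral_map_withDensity (hf : Measurable f) {w : α → ℝ≥0} (hw : Measurable w)
    {φ : β → E} (hφ : StronglyMeasurable φ) :
    ∫ y, φ y ∂(μ.withDensity fun x => w x).map f = ∫ x, w x • φ (f x) ∂μ := by
  rw [integral_map hf.aemeasurable hφ.aestronglyMeasurable,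
    integral_withDensity_eq_integral_smul₀ hw.aemeasurable]

end MeasureTheory.Measure

theorem pow_nonneg_of_even_or_subset_Ici {K : Set ℝ} {ℓ : ℕ} (hℓ : Even ℓ ∨ K ⊆ Ici 0)
    {x : ℝ} (hx : x ∈ K) : 0 ≤ x ^ ℓ := by
  rcases hℓ with hℓ | hK
  · exact hℓ.pow_nonneg x
  · exact pow_nonneg (hK hx) ℓ

/-- if `y` is a `K`-moment sequence (`K` closed) and `ℓ` is even unless
`K ⊆ [0,∞)`, then `k ↦ y (d*k+ℓ)` is a `K̃`-moment sequence with `K̃ = {x^d : x ∈ K}`. -/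
theorem subsequence_moment_seq (K : Set ℝ) (hK : IsClosed K) (d ℓ : ℕ)
    (hℓ : Even ℓ ∨ K ⊆ Set.Ici (0 : ℝ)) (y : ℕ → ℝ)
    (hy : IsMomentSeqOn K y) :
    IsMomentSeqOn ((fun x : ℝ => x ^ d) '' K) (fun k => y (d * k + ℓ)) := by
  obtain ⟨μ, hμK, hμy⟩ := hy
  let w : ℝ → ℝ≥0 := fun x => (x ^ ℓ).toNNReal
  have hw : Measurable w := (continuous_pow ℓ).measurable.real_toNNReal
  have hf : Measurable fun x : ℝ => x ^ d := (continuous_pow d).measurable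
  have hweight (k : ℕ) : (fun x => w x • (x ^ d) ^ k) =ᵐ[μ] fun x => x ^ (d * k + ℓ) := by
    filter_upwards [mem_ae_iff.mpr hμK] with x hx
    rw [NNReal.smul_def, Real.coe_toNNReal _ (pow_nonneg_of_even_or_subset_Ici hℓ hx),
      smul_eq_mul, ← pow_mul, ← pow_add, add_comm]
  refine ⟨(μ.withDensity fun x => w x).map fun x => x ^ d, ?_, fun k => ?_⟩
  · exact Measure.map_compl_image_eq_zero hf (hK.measurableSet_image (continuous_pow d))
      (withDensity_absolutelyContinuous _ _ hμK)
  · have hφ : StronglyMeasurable fun t : ℝ => t ^ k := (continuous_pow k).stronglyMeasurable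
    rw [Measure.integrable_map_withDensity_iff hf hw hφ, Measure.integral_map_withDensity hf hw hφ,
      integrable_congr (hweight k), integral_congr_ae (hweight k)]
    exact hμy _
end

section
/- If y = (y_n) is a Hamburger moment sequence, d is odd, and ℓ is even, then the subsequence (y_{dk+ℓ})_{k≥0} is also a Hamburger moment sequence. -/
open MeasureTheory
open scoped NNReal ENNReal

/-- if `y` is a Hamburger moment sequence, `d` odd and `ℓ` even, then
`k ↦ y (d*k+ℓ)` is a Hamburger moment sequence. -/
theorem hamburger_subsequence_odd (y : ℕ → ℝ) (hy : IsMomentSeqOn Set.univ y)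
    (d ℓ : ℕ) (hd : Odd d) (hℓ : Even ℓ) :
    IsMomentSeqOn Set.univ (fun k => y (d * k + ℓ)) := by
  obtain ⟨μ, -, hμ⟩ := hy
  set f : ℝ → ℝ≥0 := fun x => Real.toNNReal (x ^ ℓ) with hf
  have hfm : Measurable f := (measurable_id.pow_const ℓ).real_toNNReal
  have hmap : Measurable (fun x : ℝ => x ^ d) := measurable_id.pow_const d
  refine ⟨(μ.withDensity (fun x => (f x : ℝ≥0∞))).map (fun x => x ^ d), by simp, fun k => ?_⟩
  have key : ∀ x : ℝ, f x • (x ^ d) ^ k = x ^ (d * k + ℓ) := by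
    intro x
    have hx : (f x : ℝ) = x ^ ℓ := Real.coe_toNNReal _ (hℓ.pow_nonneg x)
    rw [NNReal.smul_def, smul_eq_mul, hx, ← pow_mul, ← pow_add, Nat.add_comm]
  have hint : Integrable (fun x : ℝ => x ^ (d * k + ℓ)) μ := (hμ (d * k + ℓ)).1
  constructor
  · rw [integrable_map_measure (by fun_prop) hmap.aemeasurable,
      integrable_withDensity_iff_integrable_smul hfm]
    simpa only [Function.comp, key] using hint
  · rw [integral_map hmap.aemeasurable (by fun_prop),
      integral_withDensity_eq_integral_smul hfm]
    simp only [key]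
    exact (hμ (d * k + ℓ)).2
end

section
/- If y = (y_n) is a Hamburger moment sequence, d is even, and ℓ is even, then the subsequence (y_{dk+ℓ})_{k≥0} is a Stieltjes moment sequence (admits a representing measure on [0,∞)). -/
open MeasureTheory
open scoped NNReal ENNReal

/-- if `y` is a Hamburger moment sequence, `d` even and `ℓ` even, then
`k ↦ y (d*k+ℓ)` is a Stieltjes moment sequence. -/
theorem hamburger_subsequence_even (y : ℕ → ℝ) (hy : IsMomentSeqOn Set.univ y)
    (d ℓ : ℕ) (hd : Even d) (hℓ : Even ℓ) :
    IsMomentSeqOn (Set.Ici 0) (fun k => y (d * k + ℓ)) := by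
  obtain ⟨μ, -, hμ⟩ := hy
  set f : ℝ → ℝ≥0 := fun x => (x ^ ℓ).toNNReal with hf
  have hfm : Measurable f := (measurable_id'.pow_const ℓ).real_toNNReal
  set ν : Measure ℝ := (μ.withDensity fun x => (f x : ENNReal)).map (fun x => x ^ d) with hν
  have hmapm : Measurable fun x : ℝ => x ^ d := measurable_id'.pow_const d
  refine ⟨ν, ?_, fun k => ?_⟩
  · rw [hν, Measure.map_apply hmapm (measurableSet_Ici.compl)]
    have : (fun x : ℝ => x ^ d) ⁻¹' (Set.Ici 0)ᶜ = ∅ := by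
      ext x
      simp only [Set.mem_preimage, Set.mem_compl_iff, Set.mem_Ici, not_le,
        Set.mem_empty_iff_false, iff_false, not_lt]
      exact hd.pow_nonneg x
    rw [this, measure_empty]
  · have key : ∀ x : ℝ, (f x : ℝ) • ((x ^ d) ^ k) = x ^ (d * k + ℓ) := by
      intro x
    -- f x = x ^ ℓ since x ^ ℓ ≥ 0
      have hℓnn : (0:ℝ) ≤ x ^ ℓ := hℓ.pow_nonneg x
      simp only [hf, smul_eq_mul, Real.coe_toNNReal _ hℓnn, ← pow_mul, pow_add]
      ring
    have hint : Integrable (fun t : ℝ => t ^ k) ν := by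
      rw [hν, integrable_map_measure
        ((measurable_id'.pow_const k).aestronglyMeasurable) hmapm.aemeasurable,
        integrable_withDensity_iff_integrable_smul hfm]
      simp only [Function.comp_def]
      have := (hμ (d * k + ℓ)).1
      exact this.congr (Filter.Eventually.of_forall fun x => (key x).symm)
    refine ⟨hint, ?_⟩
    show y (d * k + ℓ) = _
    rw [(hμ (d * k + ℓ)).2, hν,
      integral_map hmapm.aemeasurable ((measurable_id'.pow_const k).aestronglyMeasurable),
      integral_withDensity_eq_integral_smul hfm]
    exact integral_congr_ae (Filter.Eventually.of_forall fun x => (key x).symm)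
end

section
/- Suppose (n_k)_{k≥0} is a strictly increasing sequence of natural numbers such that for every Stieltjes moment sequence (y_n), the subsequence (y_{n_k}) is again a Stieltjes moment sequence. Then (n_k) is an arithmetic progression: there exist d, ℓ ∈ ℕ with n_k = dk + ℓ for all k. -/
open MeasureTheory

/-- Dirac measures give moment sequences. -/
lemma dirac_moment (ε : ℝ) (hε : 0 ≤ ε) :
    IsMomentSeqOn (Set.Ici 0) (fun m => ε ^ m) := by
  refine ⟨Measure.dirac ε, ?_, fun m => ⟨?_, ?_⟩⟩
  · rw [Measure.dirac_apply' _ (measurableSet_Ici.compl)]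
    simp [hε]
  · exact (integrable_const (ε ^ m)).congr (by simp [Filter.EventuallyEq, ae_dirac_eq])
  · rw [integral_dirac]

/-- Log-convexity (Cauchy–Schwarz) for Stieltjes moment sequences. -/
lemma moment_cs (y : ℕ → ℝ) (hy : IsMomentSeqOn (Set.Ici 0) y) (k : ℕ) :
    y (k + 1) ^ 2 ≤ y k * y (k + 2) := by
  obtain ⟨μ, hμ, hint⟩ := hy
  have hae : ∀ᵐ x ∂μ, x ∈ Set.Ici (0 : ℝ) := by
    rw [MeasureTheory.ae_iff]
    exact hμ
  have key : ∀ t : ℝ, 0 ≤ y (k + 2) * (t * t) + (2 * y (k + 1)) * t + y k := by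
    intro t
    have h0 := (hint k).1
    have h1 := (hint (k + 1)).1
    have h2 := (hint (k + 2)).1
    have hnn : 0 ≤ ∫ x, x ^ k * (1 + t * x) ^ 2 ∂μ := by
      refine integral_nonneg_of_ae ?_
      filter_upwards [hae] with x hx
      exact mul_nonneg (pow_nonneg hx k) (sq_nonneg _)
    have heq : (∫ x, x ^ k * (1 + t * x) ^ 2 ∂μ)
        = y k + 2 * t * y (k + 1) + t * t * y (k + 2) := by
      have : (fun x : ℝ => x ^ k * (1 + t * x) ^ 2)
          = fun x : ℝ => x ^ k + (2 * t) * x ^ (k + 1) + (t * t) * x ^ (k + 2) := by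
        funext x; ring
      have hF : Integrable (fun x : ℝ => x ^ k + 2 * t * x ^ (k + 1)) μ :=
        h0.add (h1.const_mul (2 * t))
      rw [this, integral_add hF (h2.const_mul (t * t)),
        integral_add h0 (h1.const_mul (2 * t)), integral_const_mul, integral_const_mul,
        (hint k).2, (hint (k + 1)).2, (hint (k + 2)).2]
    rw [heq] at hnn
    linarith
  have := discrim_le_zero key
  rw [discrim] at this
  nlinarith

/-- if a strictly increasing index sequence `n` sends every Stieltjes
moment sequence to a Stieltjes moment sequence, then `n` is an arithmetic
progression. -/
theorem subsequence_pattern_is_arithmetic (n : ℕ → ℕ) (hmono : StrictMono n)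
    (h : ∀ y : ℕ → ℝ, IsMomentSeqOn (Set.Ici 0) y →
      IsMomentSeqOn (Set.Ici 0) (fun k => y (n k))) :
    ∃ d ℓ : ℕ, ∀ k : ℕ, n k = d * k + ℓ := by
  have key : ∀ k : ℕ, n k + n (k + 2) = 2 * n (k + 1) := by
    intro k
    have hcs : ∀ ε : ℝ, 0 ≤ ε →
        ε ^ (n (k + 1) + n (k + 1)) ≤ ε ^ (n k + n (k + 2)) := by
      intro ε hε
      have := moment_cs _ (h (fun m => ε ^ m) (dirac_moment ε hε)) k
      simpa [← pow_add, sq] using this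
    have h2 : n (k + 1) + n (k + 1) ≤ n k + n (k + 2) := by
      have := hcs 2 (by norm_num)
      exact (pow_le_pow_iff_right₀ (by norm_num : (1:ℝ) < 2)).mp this
    have h2' : n k + n (k + 2) ≤ n (k + 1) + n (k + 1) := by
      have := hcs (1/2) (by norm_num)
      have h4 : ((1:ℝ)/2) ^ (n (k + 1) + n (k + 1)) ≤ ((1:ℝ)/2) ^ (n k + n (k + 2)) := this
      by_contra hcon
      push_neg at hcon
      have := pow_lt_pow_right_of_lt_one₀ (by norm_num : (0:ℝ) < 1/2)
        (by norm_num : (1:ℝ)/2 < 1) hcon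
      linarith
    omega
  refine ⟨n 1 - n 0, n 0, ?_⟩
  have hd : ∀ k : ℕ, n (k + 1) = n k + (n 1 - n 0) := by
    intro k
    induction k with
    | zero =>
        have h01 : n 0 ≤ n 1 := (hmono (by norm_num)).le
        show n 1 = n 0 + (n 1 - n 0)
        omega
    | succ m ih =>
        have h01 : n 0 ≤ n 1 := (hmono (by norm_num)).le
        have := key m
        show n (m + 2) = n (m + 1) + (n 1 - n 0)
        omega
  intro k
  induction k with
  | zero => simp
  | succ m ih => rw [hd m, ih]; ring
end

section
/- The Catalan numbers satisfy the integral representation C_n = ∫_0^4 x^n · (1/(2π))·√((4−x)/x) dx for all n ∈ ℕ; in particular, the Catalan numbers form a Hausdorff moment sequence on [0,4]. -/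
/-!
Substituting `x = 4t` turns `∫₀⁴ xⁿ √((4 - x)/x) dx` into `4ⁿ⁺¹ B(n + 1/2, 3/2)`, and
Legendre's duplication formula evaluates `Γ(n + 1/2)` in factorials, giving `2π Cₙ`. Since this
is nonzero, the integrand is integrable, so the nonnegative weight `√((4 - x)/x) / (2π)` on
`(0, 4]` is a density whose moments are the Catalan numbers.
-/

open MeasureTheory Real

open Nat Set

theorem Real.Gamma_nat_add_half_mul (n : ℕ) :
    Gamma (n + 1 / 2) * (4 ^ n * n !) = (2 * n)! * √π := by
  have h := Gamma_mul_Gamma_add_half (n + 1 / 2)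
  rw [add_assoc, add_halves, Gamma_nat_eq_factorial,
    show 2 * ((n : ℝ) + 1 / 2) = (2 * n : ℕ) + 1 by push_cast; ring, Gamma_nat_eq_factorial,
    show 1 - ((2 * n : ℕ) + 1 : ℝ) = -(2 * n : ℕ) by ring, rpow_neg two_pos.le, rpow_natCast,
    pow_mul, show (2 : ℝ) ^ 2 = 4 by norm_num] at h
  rw [mul_left_comm, h]
  field_simp

theorem integral_rpow_mul_sub_rpow {a s t : ℝ} (ha : 0 < a) (hs : 0 < s) (ht : 0 < t) :
    ∫ x in 0..a, x ^ (s - 1) * (a - x) ^ (t - 1) =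
      a ^ (s + t - 1) * (Gamma s * Gamma t / Gamma (s + t)) := by
  apply Complex.ofReal_injective
  have hB := Complex.betaIntegral_scaled s t ha
  rw [Complex.betaIntegral_eq_Gamma_mul_div _ _ (by simpa) (by simpa)] at hB
  push_cast [← intervalIntegral.integral_ofReal, Complex.ofReal_cpow ha.le,
    ← Complex.Gamma_ofReal]
  rw [← hB]
  refine intervalIntegral.integral_congr fun x hx => ?_
  rw [uIcc_of_le ha.le] at hx
  push_cast [Complex.ofReal_cpow hx.1, Complex.ofReal_cpow (sub_nonneg.2 hx.2)]
  rfl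

theorem succ_factorial_mul_factorial_mul_catalan (n : ℕ) :
    (n + 1)! * n ! * catalan n = (2 * n)! := by
  rw [factorial_succ, two_mul, ← add_choose_mul_factorial_mul_factorial, ← two_mul,
    ← centralBinom_eq_two_mul_choose, ← succ_mul_catalan_eq_centralBinom]
  ring

theorem integral_pow_mul_sqrt_four_sub_div (n : ℕ) :
    ∫ x in 0..4, x ^ n * √((4 - x) / x) = 2 * π * catalan n := by
  have hsqrt : ∀ x ∈ Ioc (0 : ℝ) 4,
      x ^ n * √((4 - x) / x) = x ^ ((n + 1 / 2 : ℝ) - 1) * (4 - x) ^ ((3 / 2 : ℝ) - 1) := by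
    rintro x ⟨hx0, hx4⟩
    rw [sqrt_eq_rpow, div_rpow (by linarith) hx0.le, show (n + 1 / 2 : ℝ) - 1 = n - 1 / 2 by ring,
      show (3 / 2 : ℝ) - 1 = 1 / 2 by norm_num, rpow_sub hx0, rpow_natCast]
    ring
  have hG : Gamma (n + 1 / 2) = (2 * n)! * √π / (4 ^ n * n !) :=
    eq_div_of_mul_eq (by positivity) (Gamma_nat_add_half_mul n)
  have hG32 : Gamma (3 / 2) = √π / 2 := by
    rw [show (3 / 2 : ℝ) = 1 / 2 + 1 by norm_num, Gamma_add_one (by norm_num), Gamma_one_half_eq]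
    ring
  have hG2 : Gamma (n + 1 / 2 + 3 / 2) = (n + 1)! := by
    rw [show (n + 1 / 2 + 3 / 2 : ℝ) = (n + 1 : ℕ) + 1 by push_cast; ring,
      Gamma_nat_eq_factorial]
  have hC : (catalan n : ℝ) = (2 * n)! / ((n + 1)! * n !) := by
    rw [eq_div_iff (by positivity), ← succ_factorial_mul_factorial_mul_catalan]
    push_cast
    ring
  calc ∫ x in 0..4, x ^ n * √((4 - x) / x)
      = ∫ x in 0..4, x ^ ((n + 1 / 2 : ℝ) - 1) * (4 - x) ^ ((3 / 2 : ℝ) - 1) :=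
        intervalIntegral.integral_congr_ae
          (ae_of_all _ fun x hx => hsqrt x (by rwa [uIoc_of_le (by norm_num)] at hx))
    _ = 4 ^ (n + 1) * (Gamma (n + 1 / 2) * Gamma (3 / 2) / Gamma (n + 1 / 2 + 3 / 2)) := by
        rw [integral_rpow_mul_sub_rpow (by norm_num) (by positivity) (by norm_num),
          show (n + 1 / 2 + 3 / 2 - 1 : ℝ) = (n + 1 : ℕ) by push_cast; ring, rpow_natCast]
    _ = 2 * π * catalan n := by
        rw [hG, hG32, hG2, hC]
        field_simp
        rw [pow_succ, sq_sqrt pi_pos.le]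
        ring

theorem isMomentSeqOn_Icc_of_density {a b : ℝ} {w : ℝ → ℝ} (hab : a ≤ b)
    (hw : ∀ x ∈ Ioc a b, 0 ≤ w x)
    (hint : ∀ n : ℕ, IntervalIntegrable (fun x => x ^ n * w x) volume a b) :
    IsMomentSeqOn (Icc a b) (fun n => ∫ x in a..b, x ^ n * w x) := by
  set μ := volume.restrict (Ioc a b)
  have hmeas : AEMeasurable (fun x => ENNReal.ofReal (w x)) μ := by
    simpa using (hint 0).1.aemeasurable.ennreal_ofReal
  have hfin : ∀ᵐ x ∂μ, ENNReal.ofReal (w x) < ⊤ :=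
    ae_of_all _ fun _ => ENNReal.ofReal_lt_top
  have hdens (n : ℕ) :
      (fun x => (ENNReal.ofReal (w x)).toReal • x ^ n) =ᵐ[μ] fun x => x ^ n * w x := by
    filter_upwards [ae_restrict_mem measurableSet_Ioc] with x hx
    rw [ENNReal.toReal_ofReal (hw x hx), smul_eq_mul, mul_comm]
  refine ⟨μ.withDensity fun x => ENNReal.ofReal (w x), ?_, fun n => ⟨?_, ?_⟩⟩
  · exact withDensity_absolutelyContinuous _ _
      (ae_restrict_of_forall_mem measurableSet_Ioc fun _ hx => Ioc_subset_Icc_self hx)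
  · rw [integrable_withDensity_iff_integrable_smul₀' hmeas hfin]
    exact (hint n).1.congr (hdens n).symm
  · rw [integral_withDensity_eq_integral_toReal_smul₀ hmeas hfin, integral_congr_ae (hdens n),
      ← intervalIntegral.integral_of_le hab]

/-- the Catalan numbers satisfy
`C n = ∫₀⁴ xⁿ · (1/(2π))·√((4−x)/x) dx`, and in particular they form a Hausdorff
moment sequence on `[0,4]`. -/
theorem catalan_integral_repr :
    (∀ n : ℕ, (catalan n : ℝ) =
      ∫ x in (0:ℝ)..4, x ^ n * (1 / (2 * π) * Real.sqrt ((4 - x) / x))) ∧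
    IsMomentSeqOn (Set.Icc 0 4) (fun n => (catalan n : ℝ)) := by
  have hC : ∀ n : ℕ, (catalan n : ℝ) =
      ∫ x in (0:ℝ)..4, x ^ n * (1 / (2 * π) * √((4 - x) / x)) := fun n => by
    simp_rw [mul_left_comm _ (1 / (2 * π))]
    rw [intervalIntegral.integral_const_mul, integral_pow_mul_sqrt_four_sub_div]
    field_simp
  have hint : ∀ n : ℕ, IntervalIntegrable
      (fun x => x ^ n * (1 / (2 * π) * √((4 - x) / x))) volume 0 4 := fun n =>
    intervalIntegral.intervalIntegrable_of_integral_ne_zero <| by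
      rw [← hC]
      exact_mod_cast right_ne_zero_of_mul
        ((succ_mul_catalan_eq_centralBinom n).trans_ne (centralBinom_ne_zero n))
  refine ⟨hC, ?_⟩
  simpa only [← hC] using
    isMomentSeqOn_Icc_of_density (by norm_num) (fun x _ => by positivity) hint
end

section
/- The central binomial coefficients satisfy binomial(2n, n) = ∫_0^4 x^n · (1/(π√(x(4−x)))) dx for all n ∈ ℕ; in particular, they form a Hausdorff moment sequence on [0,4]. -/
/-!
Substituting `x = 2 - 2 cos θ`, `θ ∈ (0, π)`, gives `dx = 2 sin θ dθ` and `√(x (4 - x)) = 2 sin θ`,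
so the `n`-th moment becomes `π⁻¹ ∫₀^π (2 - 2 cos θ)ⁿ dθ = π⁻¹ 4ⁿ ∫₀^π sin²ⁿ(θ/2) dθ`, which
Wallis' formula evaluates to `4ⁿ ∏_{i<n} (2i+1)/(2i+2) = binom(2n, n)`.
-/

open MeasureTheory Real

open Set

theorem isMomentSeqOn_Icc_of_intervalIntegrable {a b : ℝ} (hab : a ≤ b) {ρ : ℝ → ℝ}
    (hρ : ∀ x ∈ Ioc a b, 0 ≤ ρ x)
    (hint : ∀ n : ℕ, IntervalIntegrable (fun x => x ^ n * ρ x) volume a b) :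
    IsMomentSeqOn (Icc a b) (fun n => ∫ x in a..b, x ^ n * ρ x) := by
  have hρ_ae : ∀ᵐ x ∂volume.restrict (Ioc a b), (ENNReal.ofReal (ρ x)).toReal = ρ x :=
    ae_restrict_of_forall_mem measurableSet_Ioc fun x hx => ENNReal.toReal_ofReal (hρ x hx)
  have hρ_meas : AEMeasurable (fun x => ENNReal.ofReal (ρ x)) (volume.restrict (Ioc a b)) := by
    have h0 := (intervalIntegrable_iff_integrableOn_Ioc_of_le hab).1 (hint 0)
    simp only [pow_zero, one_mul] at h0
    exact h0.aemeasurable.ennreal_ofReal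
  have hfin : ∀ᵐ x ∂volume.restrict (Ioc a b), ENNReal.ofReal (ρ x) < ⊤ :=
    ae_of_all _ fun _ => ENNReal.ofReal_lt_top
  refine ⟨(volume.restrict (Ioc a b)).withDensity fun x => ENNReal.ofReal (ρ x), ?_, fun n => ?_⟩
  · rw [withDensity_apply' _ _, Measure.restrict_restrict' measurableSet_Ioc,
      (disjoint_compl_left.mono_right Ioc_subset_Icc_self).inter_eq, Measure.restrict_empty,
      lintegral_zero_measure]
  have hmoment : ∀ᵐ x ∂volume.restrict (Ioc a b),
      (ENNReal.ofReal (ρ x)).toReal • x ^ n = x ^ n * ρ x := by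
    filter_upwards [hρ_ae] with x hx
    rw [hx, smul_eq_mul, mul_comm]
  constructor
  · rw [integrable_withDensity_iff_integrable_smul₀' hρ_meas hfin, integrable_congr hmoment]
    exact (intervalIntegrable_iff_integrableOn_Ioc_of_le hab).1 (hint n)
  · rw [integral_withDensity_eq_integral_toReal_smul₀ hρ_meas hfin, integral_congr_ae hmoment]
    exact intervalIntegral.integral_of_le hab

theorem four_pow_mul_prod_eq_centralBinom (n : ℕ) :
    (4 : ℝ) ^ n * ∏ i ∈ Finset.range n, (2 * (i : ℝ) + 1) / (2 * i + 2) = n.centralBinom := by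
  induction n with
  | zero => simp
  | succ n ih =>
    have hrec : ((n : ℝ) + 1) * (n + 1).centralBinom = 2 * (2 * n + 1) * n.centralBinom := by
      exact_mod_cast Nat.succ_mul_centralBinom_succ n
    rw [Finset.prod_range_succ, pow_succ, mul_mul_mul_comm, ih]
    field_simp
    linear_combination (-2 : ℝ) * hrec

theorem integral_sin_pow_zero_pi_div_two (m : ℕ) :
    ∫ x in (0 : ℝ)..π / 2, sin x ^ m = (∫ x in (0 : ℝ)..π, sin x ^ m) / 2 := by
  have hint : ∀ a b : ℝ, IntervalIntegrable (fun x => sin x ^ m) volume a b :=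
    fun a b => (continuous_sin.pow m).intervalIntegrable a b
  have hsymm : ∫ x in π / 2..π, sin x ^ m = ∫ x in (0 : ℝ)..π / 2, sin x ^ m := by
    have h := intervalIntegral.integral_comp_sub_left (fun x => sin x ^ m) π (a := π / 2) (b := π)
    simp only [sin_pi_sub, sub_self, show π - π / 2 = π / 2 by ring] at h
    exact h
  have hsplit := intervalIntegral.integral_add_adjacent_intervals (hint 0 (π / 2)) (hint (π / 2) π)
  linarith

theorem two_sub_two_mul_cos (θ : ℝ) : 2 - 2 * cos θ = 4 * sin (θ / 2) ^ 2 := by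
  have hcos := cos_two_mul (θ / 2)
  rw [show 2 * (θ / 2) = θ by ring] at hcos
  linear_combination (-2 : ℝ) * hcos - 4 * sin_sq_add_cos_sq (θ / 2)

theorem integral_two_sub_two_mul_cos_pow (n : ℕ) :
    ∫ θ in (0 : ℝ)..π, (2 - 2 * cos θ) ^ n = π * n.centralBinom := by
  simp_rw [two_sub_two_mul_cos, mul_pow, ← pow_mul]
  rw [intervalIntegral.integral_comp_div (fun u => 4 ^ n * sin u ^ (2 * n)) two_ne_zero,
    zero_div, intervalIntegral.integral_const_mul, integral_sin_pow_zero_pi_div_two,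
    integral_sin_pow_even, smul_eq_mul, ← four_pow_mul_prod_eq_centralBinom]
  ring

theorem strictMonoOn_two_sub_two_mul_cos :
    StrictMonoOn (fun θ : ℝ => 2 - 2 * cos θ) (Icc 0 π) := fun _ ha _ hb hab => by
  have := strictAntiOn_cos ha hb hab
  simp only
  linarith

theorem image_two_sub_two_mul_cos_Ioo :
    (fun θ : ℝ => 2 - 2 * cos θ) '' Ioo 0 π = Ioo 0 4 := by
  rw [ContinuousOn.image_Ioo_of_strictMonoOn pi_pos.le (by fun_prop)
    strictMonoOn_two_sub_two_mul_cos]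
  norm_num

theorem hasDerivWithinAt_two_sub_two_mul_cos (s : Set ℝ) (θ : ℝ) :
    HasDerivWithinAt (fun θ : ℝ => 2 - 2 * cos θ) (2 * sin θ) s θ := by
  simpa using (((hasDerivAt_cos θ).const_mul 2).const_sub 2).hasDerivWithinAt

theorem integral_Ioo_zero_four_eq (g : ℝ → ℝ) :
    ∫ x in Ioo 0 4, g x = ∫ θ in Ioo 0 π, |2 * sin θ| * g (2 - 2 * cos θ) := by
  rw [← image_two_sub_two_mul_cos_Ioo]
  exact integral_image_eq_integral_abs_deriv_smul measurableSet_Ioo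
    (fun θ _ => hasDerivWithinAt_two_sub_two_mul_cos _ θ)
    (strictMonoOn_two_sub_two_mul_cos.injOn.mono Ioo_subset_Icc_self) g

theorem integrableOn_Ioo_zero_four_iff (g : ℝ → ℝ) :
    IntegrableOn g (Ioo 0 4) ↔
      IntegrableOn (fun θ => |2 * sin θ| * g (2 - 2 * cos θ)) (Ioo 0 π) := by
  rw [← image_two_sub_two_mul_cos_Ioo]
  exact integrableOn_image_iff_integrableOn_abs_deriv_smul measurableSet_Ioo
    (fun θ _ => hasDerivWithinAt_two_sub_two_mul_cos _ θ)
    (strictMonoOn_two_sub_two_mul_cos.injOn.mono Ioo_subset_Icc_self) g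

noncomputable def arcsineDensity (x : ℝ) : ℝ := 1 / (π * √(x * (4 - x)))

theorem arcsineDensity_nonneg (x : ℝ) : 0 ≤ arcsineDensity x := by
  unfold arcsineDensity
  positivity

theorem sqrt_two_sub_two_mul_cos_mul (θ : ℝ) :
    √((2 - 2 * cos θ) * (4 - (2 - 2 * cos θ))) = |2 * sin θ| := by
  rw [← sqrt_sq_eq_abs]
  congr 1
  linear_combination (-4 : ℝ) * sin_sq_add_cos_sq θ

theorem abs_two_mul_sin_mul_arcsineDensity {θ : ℝ} (hθ : θ ∈ Ioo 0 π) :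
    |2 * sin θ| * arcsineDensity (2 - 2 * cos θ) = π⁻¹ := by
  have hsin : |2 * sin θ| ≠ 0 := by
    simpa using (sin_pos_of_pos_of_lt_pi hθ.1 hθ.2).ne'
  rw [arcsineDensity, sqrt_two_sub_two_mul_cos_mul]
  field_simp

theorem abs_two_mul_sin_mul_pow_mul_arcsineDensity (n : ℕ) {θ : ℝ} (hθ : θ ∈ Ioo 0 π) :
    |2 * sin θ| * ((2 - 2 * cos θ) ^ n * arcsineDensity (2 - 2 * cos θ)) =
      (2 - 2 * cos θ) ^ n * π⁻¹ := by
  rw [mul_left_comm, abs_two_mul_sin_mul_arcsineDensity hθ]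

theorem intervalIntegrable_pow_mul_arcsineDensity (n : ℕ) :
    IntervalIntegrable (fun x => x ^ n * arcsineDensity x) volume 0 4 := by
  rw [intervalIntegrable_iff_integrableOn_Ioo_of_le (by norm_num), integrableOn_Ioo_zero_four_iff]
  refine IntegrableOn.congr_fun ?_
    (fun θ hθ => (abs_two_mul_sin_mul_pow_mul_arcsineDensity n hθ).symm) measurableSet_Ioo
  exact (Continuous.integrableOn_Icc (by fun_prop)).mono_set Ioo_subset_Icc_self

theorem integral_pow_mul_arcsineDensity (n : ℕ) :
    ∫ x in (0 : ℝ)..4, x ^ n * arcsineDensity x = n.centralBinom := by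
  rw [intervalIntegral.integral_of_le (by norm_num), integral_Ioc_eq_integral_Ioo,
    integral_Ioo_zero_four_eq, setIntegral_congr_fun measurableSet_Ioo
      (fun θ hθ => abs_two_mul_sin_mul_pow_mul_arcsineDensity n hθ),
    ← integral_Ioc_eq_integral_Ioo, ← intervalIntegral.integral_of_le pi_pos.le,
    intervalIntegral.integral_mul_const, integral_two_sub_two_mul_cos_pow]
  field_simp

/-- the central binomial coefficients satisfy
`binom(2n,n) = ∫₀⁴ xⁿ / (π·√(x(4−x))) dx`, and in particular they form a
Hausdorff moment sequence on `[0,4]`. -/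
theorem centralBinom_integral_repr :
    (∀ n : ℕ, (Nat.centralBinom n : ℝ) =
      ∫ x in (0:ℝ)..4, x ^ n * (1 / (π * Real.sqrt (x * (4 - x))))) ∧
    IsMomentSeqOn (Set.Icc 0 4) (fun n => (Nat.centralBinom n : ℝ)) := by
  refine ⟨fun n => (integral_pow_mul_arcsineDensity n).symm, ?_⟩
  simpa only [integral_pow_mul_arcsineDensity] using
    isMomentSeqOn_Icc_of_intervalIntegrable (by norm_num) (fun x _ => arcsineDensity_nonneg x)
      intervalIntegrable_pow_mul_arcsineDensity
end

section
/- The Motzkin numbers satisfy M_n = ∫_{−1}^3 x^n · (1/(2π))·√((3−x)(1+x)) dx for all n ∈ ℕ; in particular, the Motzkin numbers form a Hausdorff moment sequence on [−1,3]. -/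
/-!
Under `x = 1 + s` the weight becomes the semicircle density `(1/2π)√(4 - s²)` on `[-2, 2]`.
Substituting `s = 2 cos θ` and using the Wallis integrals `∫₀^π cos^(2m) = π·binom(2m, m)/4^m`,
its moments are the Catalan numbers in even degree and vanish in odd degree. Expanding `(1 + s)ⁿ`
binomially then gives `∑ₖ binom(n, 2k)·Cₖ = Mₙ`. Since the weight is continuous and nonnegative
on `[-1, 3]`, it is the density of a measure supported there whose moments are these integrals.
-/

open MeasureTheory Real

/-- The `n`-th Motzkin number, via the classical formula
`M n = ∑ k, (n choose 2k) · catalan k` (terms with `2k > n` vanish). -/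
def motzkin (n : ℕ) : ℕ := ∑ k ∈ Finset.range (n + 1), n.choose (2 * k) * catalan k

open Finset

theorem Finset.sum_range_two_mul {M : Type*} [AddCommMonoid M] (f : ℕ → M) (n : ℕ) :
    ∑ k ∈ range (2 * n), f k = ∑ m ∈ range n, (f (2 * m) + f (2 * m + 1)) := by
  induction n with
  | zero => simp
  | succ n ih => rw [Nat.mul_succ, sum_range_succ, sum_range_succ, sum_range_succ, ih, add_assoc]

theorem isMomentSeqOn_Icc_integral_pow_mul {a b : ℝ} (hab : a ≤ b) {w : ℝ → ℝ}
    (hw : IntegrableOn w (Set.Icc a b)) (hw_nonneg : ∀ x ∈ Set.Icc a b, 0 ≤ w x) :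
    IsMomentSeqOn (Set.Icc a b) fun n => ∫ x in a..b, x ^ n * w x := by
  have hdens : AEMeasurable (fun x => ENNReal.ofReal (w x)) (volume.restrict (Set.Icc a b)) :=
    hw.aemeasurable.ennreal_ofReal
  have hfin : ∀ᵐ x ∂volume.restrict (Set.Icc a b), ENNReal.ofReal (w x) < ⊤ :=
    ae_of_all _ fun _ => ENNReal.ofReal_lt_top
  have hsmul : ∀ n : ℕ, Set.EqOn (fun x => (ENNReal.ofReal (w x)).toReal • x ^ n)
      (fun x => x ^ n * w x) (Set.Icc a b) := fun n x hx => by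
    simp [ENNReal.toReal_ofReal (hw_nonneg x hx), mul_comm]
  refine ⟨(volume.restrict (Set.Icc a b)).withDensity fun x => ENNReal.ofReal (w x), ?_,
    fun n => ⟨?_, ?_⟩⟩
  · exact withDensity_absolutelyContinuous _ _ (by simp [Measure.restrict_apply])
  · rw [integrable_withDensity_iff_integrable_smul₀' hdens hfin]
    exact (hw.continuousOn_mul (continuousOn_pow n) isCompact_Icc).congr_fun (hsmul n).symm
      measurableSet_Icc
  · rw [integral_withDensity_eq_integral_toReal_smul₀ hdens hfin,
      setIntegral_congr_fun measurableSet_Icc (hsmul n), integral_Icc_eq_integral_Ioc,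
      ← intervalIntegral.integral_of_le hab]

theorem integral_cos_pow_two_mul (m : ℕ) :
    ∫ x in (0 : ℝ)..π, cos x ^ (2 * m) = π * m.centralBinom / 4 ^ m := by
  induction m with
  | zero => simp
  | succ m ih =>
    have hcb : ((m : ℝ) + 1) * (m + 1).centralBinom = 2 * (2 * m + 1) * m.centralBinom := by
      exact_mod_cast Nat.succ_mul_centralBinom_succ m
    rw [Nat.mul_succ, integral_cos_pow, ih]
    simp only [sin_pi, sin_zero, mul_zero, sub_zero, zero_div, zero_add]
    push_cast
    field_simp
    linear_combination (-2 * 4 ^ m) * hcb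

theorem integral_cos_pow_two_mul_add_one (m : ℕ) :
    ∫ x in (0 : ℝ)..π, cos x ^ (2 * m + 1) = 0 := by
  induction m with
  | zero => simp
  | succ m ih => rw [show 2 * (m + 1) + 1 = 2 * m + 1 + 2 by ring, integral_cos_pow, ih]; simp

theorem integral_pow_mul_sqrt_four_sub_sq (k : ℕ) :
    ∫ s in (-2 : ℝ)..2, s ^ k * √(4 - s ^ 2) =
      2 ^ (k + 2) / (k + 2) * ∫ x in (0 : ℝ)..π, cos x ^ k := by
  have hsubst := intervalIntegral.integral_comp_mul_deriv (a := π) (b := 0)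
    (f := fun x => 2 * cos x) (f' := fun x => -(2 * sin x)) (g := fun s => s ^ k * √(4 - s ^ 2))
    (fun x _ => (hasDerivAt_cos x).const_mul 2 |>.congr_deriv (by ring)) (by fun_prop)
    (by fun_prop)
  simp only [Function.comp_apply, cos_pi, cos_zero, mul_neg, mul_one,
    intervalIntegral.integral_neg] at hsubst
  rw [← hsubst, intervalIntegral.integral_symm, neg_neg]
  have hintegrand : ∀ x ∈ Set.uIcc 0 π,
      (2 * cos x) ^ k * √(4 - (2 * cos x) ^ 2) * (2 * sin x) =
        2 ^ (k + 2) * (cos x ^ k - cos x ^ (k + 2)) := by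
    intro x hx
    rw [Set.uIcc_of_le pi_nonneg] at hx
    have hsqrt : √(4 - (2 * cos x) ^ 2) = 2 * sin x := by
      rw [show 4 - (2 * cos x) ^ 2 = (2 * sin x) ^ 2 by linear_combination -4 * sin_sq_add_cos_sq x]
      exact sqrt_sq (by linarith [sin_nonneg_of_mem_Icc hx])
    rw [hsqrt]
    linear_combination (2 ^ (k + 2) * cos x ^ k) * sin_sq_add_cos_sq x
  rw [intervalIntegral.integral_congr hintegrand, intervalIntegral.integral_const_mul,
    intervalIntegral.integral_sub
      ((by fun_prop : Continuous fun x => cos x ^ k).intervalIntegrable _ _)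
      ((by fun_prop : Continuous fun x => cos x ^ (k + 2)).intervalIntegrable _ _),
    integral_cos_pow]
  simp only [sin_pi, sin_zero, mul_zero, sub_zero, zero_div, zero_add]
  field_simp
  ring

theorem integral_pow_mul_semicircle (k : ℕ) :
    ∫ s in (-2 : ℝ)..2, s ^ k * (1 / (2 * π) * √(4 - s ^ 2)) =
      if Even k then (catalan (k / 2) : ℝ) else 0 := by
  simp_rw [mul_left_comm _ (1 / (2 * π)), intervalIntegral.integral_const_mul,
    integral_pow_mul_sqrt_four_sub_sq]
  obtain ⟨m, rfl | rfl⟩ := Nat.even_or_odd' k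
  · have hcat : ((m : ℝ) + 1) * catalan m = m.centralBinom := by
      exact_mod_cast succ_mul_catalan_eq_centralBinom m
    rw [integral_cos_pow_two_mul, if_pos (even_two_mul m), Nat.mul_div_cancel_left m two_pos,
      ← hcat, pow_add, pow_mul]
    push_cast
    field_simp
    ring
  · rw [integral_cos_pow_two_mul_add_one, if_neg (Nat.not_even_iff_odd.2 (odd_two_mul_add_one m))]
    simp

theorem motzkin_eq_sum_choose_mul_ite (n : ℕ) :
    motzkin n = ∑ k ∈ range (n + 1), n.choose k * if Even k then catalan (k / 2) else 0 := by
  have hvanish : ∀ k ∈ range (2 * (n + 1)), k ∉ range (n + 1) →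
      (n.choose k * if Even k then catalan (k / 2) else 0) = 0 := by
    intro k _ hk
    rw [Nat.choose_eq_zero_of_lt (by simpa using hk), zero_mul]
  rw [sum_subset (range_subset_range.2 (by omega)) hvanish, sum_range_two_mul, motzkin]
  refine sum_congr rfl fun m _ => ?_
  simp [Nat.mul_div_cancel_left m two_pos, Nat.not_even_iff_odd.2 (odd_two_mul_add_one m)]

theorem motzkin_eq_integral (n : ℕ) :
    (motzkin n : ℝ) =
      ∫ x in (-1 : ℝ)..3, x ^ n * (1 / (2 * π) * √((3 - x) * (1 + x))) := by
  have hbinom : ∀ s : ℝ, (1 + s) ^ n * (1 / (2 * π) * √(4 - s ^ 2)) =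
      ∑ k ∈ range (n + 1), (n.choose k : ℝ) * (s ^ k * (1 / (2 * π) * √(4 - s ^ 2))) := by
    intro s
    rw [add_comm, add_pow, sum_mul]
    exact sum_congr rfl fun k _ => by ring
  calc (motzkin n : ℝ)
      = ∑ k ∈ range (n + 1), (n.choose k : ℝ) * if Even k then (catalan (k / 2) : ℝ) else 0 := by
        rw [motzkin_eq_sum_choose_mul_ite]; push_cast; rfl
    _ = ∑ k ∈ range (n + 1), (n.choose k : ℝ) *
          ∫ s in (-2 : ℝ)..2, s ^ k * (1 / (2 * π) * √(4 - s ^ 2)) := by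
        simp_rw [integral_pow_mul_semicircle]
    _ = ∫ s in (-2 : ℝ)..2, (1 + s) ^ n * (1 / (2 * π) * √(4 - s ^ 2)) := by
        simp_rw [hbinom, ← intervalIntegral.integral_const_mul]
        rw [intervalIntegral.integral_finsetSum]
        exact fun k _ => (by fun_prop : Continuous _).intervalIntegrable _ _
    _ = ∫ x in (1 + -2 : ℝ)..1 + 2, x ^ n * (1 / (2 * π) * √((3 - x) * (1 + x))) := by
        rw [← intervalIntegral.integral_comp_add_left]
        refine intervalIntegral.integral_congr fun s _ => ?_
        rw [show (3 - (1 + s)) * (1 + (1 + s)) = 4 - s ^ 2 by ring]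
    _ = _ := by norm_num

/-- the Motzkin numbers satisfy
`M n = ∫_{−1}³ xⁿ · (1/(2π))·√((3−x)(1+x)) dx`, and in particular they form a
Hausdorff moment sequence on `[−1,3]`. -/
theorem motzkin_integral_repr :
    (∀ n : ℕ, (motzkin n : ℝ) =
      ∫ x in (-1:ℝ)..3, x ^ n * (1 / (2 * π) * Real.sqrt ((3 - x) * (1 + x)))) ∧
    IsMomentSeqOn (Set.Icc (-1) 3) (fun n => (motzkin n : ℝ)) := by
  refine ⟨motzkin_eq_integral, ?_⟩
  have hmoment := isMomentSeqOn_Icc_integral_pow_mul (by norm_num : (-1 : ℝ) ≤ 3)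
    (w := fun x => 1 / (2 * π) * √((3 - x) * (1 + x)))
    ((by fun_prop : Continuous _).integrableOn_Icc) (fun x _ => by positivity)
  simpa only [← motzkin_eq_integral] using hmoment
end

section
/- The central trinomial coefficients satisfy T_n = ∫_{−1}^3 x^n · (1/(π√((3−x)(1+x)))) dx for all n ∈ ℕ, where T_n is the coefficient of x^n in (1+x+x²)^n; in particular, (T_n) is a Hausdorff moment sequence on [−1,3]. -/
open MeasureTheory Real Polynomial

/-- The `n`-th central trinomial coefficient: the coefficient of `x^n` in
`(1 + x + x²)^n`. -/
noncomputable def centralTrinomial (n : ℕ) : ℕ := (((1 + X + X ^ 2 : Polynomial ℕ)) ^ n).coeff n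

/-!
Substituting `x = 1 + 2 cos θ` turns the density `1 / (π √((3 - x)(1 + x)))` on `(-1, 3)` into
the uniform density `1 / π` on `(0, π)`, so the `n`-th moment is `π⁻¹ ∫₀^π (1 + 2 cos θ)ⁿ dθ`.
Expanding binomially, `∫₀^π (2 cos θ)ᵏ dθ` vanishes for odd `k` and equals `π · C(2m, m)` for
`k = 2m` (Wallis' reduction), while expanding `(1 + X + X²)ⁿ = ((1 + X²) + X)ⁿ` gives
`Tₙ = ∑ₖ C(n, k) C(k, k/2) [k even]`, the same sum.
-/

open Set

theorem coeff_one_add_X_sq_pow_self {R : Type*} [CommSemiring R] (k : ℕ) :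
    ((1 + X ^ 2 : R[X]) ^ k).coeff k = if 2 ∣ k then (k.choose (k / 2) : R) else 0 := by
  have : (1 + X ^ 2 : R[X]) ^ k = expand R 2 ((1 + X) ^ k) := by simp
  rw [this, coeff_expand two_pos, coeff_one_add_X_pow]

theorem centralTrinomial_eq_sum (n : ℕ) :
    centralTrinomial n =
      ∑ k ∈ Finset.range (n + 1), n.choose k * if 2 ∣ k then k.choose (k / 2) else 0 := by
  rw [centralTrinomial, show (1 + X + X ^ 2 : ℕ[X]) = (1 + X ^ 2) + X by ring, add_pow,
    finsetSum_coeff]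
  refine Finset.sum_congr rfl fun k hk => ?_
  obtain ⟨j, rfl⟩ := Nat.exists_eq_add_of_le (Finset.mem_range_succ_iff.1 hk)
  rw [Nat.add_sub_cancel_left, mul_comm, coeff_natCast_mul, coeff_mul_X_pow,
    coeff_one_add_X_sq_pow_self]
  simp only [Nat.cast_id]

theorem integral_two_mul_cos_pow_two_mul (m : ℕ) :
    ∫ θ in (0 : ℝ)..π, (2 * cos θ) ^ (2 * m) = π * m.centralBinom := by
  induction m with
  | zero => simp
  | succ m ih =>
    have hrec : ∫ θ in (0 : ℝ)..π, (2 * cos θ) ^ (2 * m + 2) =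
        4 * (2 * m + 1) / (2 * m + 2) * ∫ θ in (0 : ℝ)..π, (2 * cos θ) ^ (2 * m) := by
      simp only [mul_pow, intervalIntegral.integral_const_mul, integral_cos_pow, sin_zero, sin_pi]
      push_cast
      ring
    have hbinom : ((m : ℝ) + 1) * (m + 1).centralBinom = 2 * (2 * m + 1) * m.centralBinom := by
      exact_mod_cast Nat.succ_mul_centralBinom_succ m
    rw [mul_add_one, hrec, ih]
    field_simp
    linear_combination -2 * hbinom

theorem integral_two_mul_cos_pow (k : ℕ) :
    ∫ θ in (0 : ℝ)..π, (2 * cos θ) ^ k = if 2 ∣ k then π * k.choose (k / 2) else 0 := by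
  obtain ⟨m, rfl | rfl⟩ := Nat.even_or_odd' k
  · rw [if_pos (dvd_mul_right 2 m), integral_two_mul_cos_pow_two_mul,
      Nat.mul_div_cancel_left _ two_pos]
    rfl
  · have := integral_sin_pow_mul_cos_pow_odd (a := 0) (b := π) 0 m
    simp only [pow_zero, one_mul, sin_zero, sin_pi, intervalIntegral.integral_same] at this
    simp_rw [if_neg (by omega : ¬ 2 ∣ 2 * m + 1), mul_pow, intervalIntegral.integral_const_mul,
      this, mul_zero]

theorem integral_one_add_two_mul_cos_pow (n : ℕ) :
    ∫ θ in (0 : ℝ)..π, (1 + 2 * cos θ) ^ n = π * centralTrinomial n := by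
  simp_rw [add_comm (1 : ℝ), add_pow, one_pow, mul_one]
  rw [intervalIntegral.integral_finsetSum fun k _ =>
    (by fun_prop : Continuous fun θ => (2 * cos θ) ^ k * (n.choose k : ℝ)).intervalIntegrable _ _]
  simp_rw [intervalIntegral.integral_mul_const, integral_two_mul_cos_pow, centralTrinomial_eq_sum]
  push_cast
  rw [Finset.mul_sum]
  refine Finset.sum_congr rfl fun k _ => ?_
  split_ifs <;> ring

noncomputable def trinomialDensity (x : ℝ) : ℝ := 1 / (π * √((3 - x) * (1 + x)))

theorem image_one_add_two_mul_cos_Ioo : (fun θ => 1 + 2 * cos θ) '' Ioo 0 π = Ioo (-1) 3 := by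
  refine Subset.antisymm ?_ ?_
  · rintro _ ⟨θ, hθ, rfl⟩
    have hlt : cos θ < cos 0 :=
      strictAntiOn_cos (left_mem_Icc.2 pi_pos.le) (Ioo_subset_Icc_self hθ) hθ.1
    have hgt : cos π < cos θ :=
      strictAntiOn_cos (Ioo_subset_Icc_self hθ) (right_mem_Icc.2 pi_pos.le) hθ.2
    rw [cos_zero] at hlt
    rw [cos_pi] at hgt
    constructor <;> linarith
  · rw [show Ioo (-1 : ℝ) 3 = Ioo (1 + 2 * cos π) (1 + 2 * cos 0) by norm_num]
    exact intermediate_value_Ioo' pi_pos.le (f := fun θ => 1 + 2 * cos θ) (by fun_prop)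

theorem injOn_one_add_two_mul_cos : InjOn (fun θ => 1 + 2 * cos θ) (Ioo 0 π) := fun _ ha _ hb h =>
  injOn_cos (Ioo_subset_Icc_self ha) (Ioo_subset_Icc_self hb) (by simpa using h)

theorem hasDerivWithinAt_one_add_two_mul_cos (s : Set ℝ) (θ : ℝ) :
    HasDerivWithinAt (fun θ => 1 + 2 * cos θ) (2 * -sin θ) s θ :=
  (((hasDerivAt_cos θ).const_mul 2).const_add 1).hasDerivWithinAt

theorem abs_deriv_smul_mul_trinomialDensity (g : ℝ → ℝ) {θ : ℝ} (hθ : θ ∈ Ioo 0 π) :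
    |2 * -sin θ| • (g (1 + 2 * cos θ) * trinomialDensity (1 + 2 * cos θ)) =
      π⁻¹ * g (1 + 2 * cos θ) := by
  have hsin : 0 < sin θ := sin_pos_of_pos_of_lt_pi hθ.1 hθ.2
  have hsq : (3 - (1 + 2 * cos θ)) * (1 + (1 + 2 * cos θ)) = (2 * sin θ) ^ 2 := by
    linear_combination -4 * sin_sq_add_cos_sq θ
  rw [trinomialDensity, hsq, sqrt_sq (by positivity), smul_eq_mul, abs_mul, abs_neg,
    abs_of_pos hsin]
  field_simp
  norm_num

theorem integrableOn_mul_trinomialDensity_iff (g : ℝ → ℝ) :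
    IntegrableOn (fun x => g x * trinomialDensity x) (Ioo (-1) 3) ↔
      IntegrableOn (fun θ => g (1 + 2 * cos θ)) (Ioo 0 π) := by
  rw [← image_one_add_two_mul_cos_Ioo, integrableOn_image_iff_integrableOn_abs_deriv_smul
    measurableSet_Ioo (fun θ _ => hasDerivWithinAt_one_add_two_mul_cos _ θ)
    injOn_one_add_two_mul_cos, integrableOn_congr_fun
    (fun θ hθ => abs_deriv_smul_mul_trinomialDensity g hθ) measurableSet_Ioo, IntegrableOn,
    integrable_const_mul_iff (inv_ne_zero pi_ne_zero).isUnit, IntegrableOn]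

theorem setIntegral_mul_trinomialDensity (g : ℝ → ℝ) :
    ∫ x in Ioo (-1) 3, g x * trinomialDensity x = π⁻¹ * ∫ θ in (0 : ℝ)..π, g (1 + 2 * cos θ) := by
  rw [← image_one_add_two_mul_cos_Ioo, integral_image_eq_integral_abs_deriv_smul
    measurableSet_Ioo (fun θ _ => hasDerivWithinAt_one_add_two_mul_cos _ θ)
    injOn_one_add_two_mul_cos, setIntegral_congr_fun measurableSet_Ioo
    (fun θ hθ => abs_deriv_smul_mul_trinomialDensity g hθ), integral_const_mul,
    intervalIntegral.integral_of_le pi_pos.le, integral_Ioc_eq_integral_Ioo]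

theorem isMomentSeqOn_of_density {K : Set ℝ} (hK : MeasurableSet K) {w : ℝ → ℝ}
    (hw : Measurable w) (hw_nonneg : ∀ x, 0 ≤ w x)
    (hint : ∀ n : ℕ, IntegrableOn (fun x => x ^ n * w x) K) :
    IsMomentSeqOn K fun n => ∫ x in K, x ^ n * w x := by
  have hfin : ∀ᵐ x ∂volume.restrict K, ENNReal.ofReal (w x) < ⊤ :=
    ae_of_all _ fun _ => ENNReal.ofReal_lt_top
  have hdens : ∀ (n : ℕ) x, (ENNReal.ofReal (w x)).toReal • x ^ n = x ^ n * w x := fun n x => by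
    rw [ENNReal.toReal_ofReal (hw_nonneg x), smul_eq_mul, mul_comm]
  refine ⟨(volume.restrict K).withDensity fun x => ENNReal.ofReal (w x),
    withDensity_absolutelyContinuous _ _ ?_, fun n => ⟨?_, ?_⟩⟩
  · rw [Measure.restrict_apply hK.compl, compl_inter_self, measure_empty]
  · rw [integrable_withDensity_iff_integrable_smul' hw.ennreal_ofReal hfin]
    simp only [hdens]
    exact hint n
  · rw [integral_withDensity_eq_integral_toReal_smul hw.ennreal_ofReal hfin]
    simp only [hdens]

theorem setIntegral_pow_mul_trinomialDensity (n : ℕ) :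
    ∫ x in Icc (-1) 3, x ^ n * trinomialDensity x = centralTrinomial n := by
  rw [integral_Icc_eq_integral_Ioo, setIntegral_mul_trinomialDensity,
    integral_one_add_two_mul_cos_pow, inv_mul_cancel_left₀ pi_ne_zero]

/-- the central trinomial coefficients satisfy
`T n = ∫_{−1}³ xⁿ / (π·√((3−x)(1+x))) dx`, and in particular they form a
Hausdorff moment sequence on `[−1,3]`. -/
theorem centralTrinomial_integral_repr :
    (∀ n : ℕ, (centralTrinomial n : ℝ) =
      ∫ x in (-1:ℝ)..3, x ^ n * (1 / (π * Real.sqrt ((3 - x) * (1 + x))))) ∧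
    IsMomentSeqOn (Set.Icc (-1) 3) (fun n => (centralTrinomial n : ℝ)) := by
  refine ⟨fun n => ?_, ?_⟩
  · rw [intervalIntegral.integral_of_le (by norm_num), integral_Ioc_eq_integral_Ioo,
      ← integral_Icc_eq_integral_Ioo, ← setIntegral_pow_mul_trinomialDensity]
    rfl
  · have hint (n : ℕ) : IntegrableOn (fun x => x ^ n * trinomialDensity x) (Icc (-1) 3) :=
      (integrableOn_Icc_iff_integrableOn_Ioo).2 <| (integrableOn_mul_trinomialDensity_iff _).2 <|
        (Continuous.integrableOn_Icc (by fun_prop)).mono_set Ioo_subset_Icc_self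
    have hw_meas : Measurable trinomialDensity := by unfold trinomialDensity; fun_prop
    have hw_nonneg (x : ℝ) : 0 ≤ trinomialDensity x := by unfold trinomialDensity; positivity
    simpa only [setIntegral_pow_mul_trinomialDensity] using
      isMomentSeqOn_of_density measurableSet_Icc hw_meas hw_nonneg hint
end

section
/- For any d, ℓ ∈ ℕ with d ≥ 1, the subsequence (C_{dn+ℓ})_{n≥0} of Catalan numbers is a Hausdorff moment sequence supported in [0, 4^d]; in particular C_{dn} = ∫_0^{4^d} x^n · (x^{(1−d)/d}/(2dπ))·√((4−x^{1/d})/x^{1/d}) dx. -/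
/-!
Substituting `x = 4 sin² θ` turns `∫₀⁴ xᵐ ρ(x) dx`, with `ρ(x) = √((4 - x)/x) / (2π)`, into the
Wallis integral `4ᵐ⁺¹/π ∫₀^{π/2} sin²ᵐ θ cos² θ dθ = C_m`, so `(C_n)` is the moment sequence of
`ρ(x) dx` on `[0, 4]`. If `(y_n)` is the moment sequence of `μ` on `[0, a]`, then `(y_{dn+ℓ})` is
the moment sequence of the image of `xˡ μ(dx)` under `x ↦ xᵈ`, which lives on `[0, aᵈ]`. For
`ℓ = 0` and `μ = ρ(x) dx`, the substitution `u = xᵈ` computes the density of this image.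
-/

open MeasureTheory Real

open Set intervalIntegral

theorem intervalIntegral.integral_eq_two_smul_integral_half_of_symm {E : Type*}
    [NormedAddCommGroup E] [NormedSpace ℝ E] {f : ℝ → E} {b : ℝ}
    (hf : IntervalIntegrable f volume 0 b) (hsymm : ∀ x, f (b - x) = f x) :
    ∫ x in 0..b, f x = 2 • ∫ x in 0..b / 2, f x := by
  have hmid : b / 2 ∈ uIcc 0 b := by
    rcases le_total 0 b with hb | hb
    · exact mem_uIcc.2 (Or.inl ⟨by linarith, by linarith⟩)
    · exact mem_uIcc.2 (Or.inr ⟨by linarith, by linarith⟩)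
  have hreflect : ∫ x in b / 2..b, f x = ∫ x in 0..b / 2, f x := by
    have h := integral_comp_sub_left f b (a := b / 2) (b := b)
    simp only [hsymm, sub_self] at h
    rw [h, show b - b / 2 = b / 2 by ring]
  rw [← integral_add_adjacent_intervals (hf.mono_set (uIcc_subset_uIcc left_mem_uIcc hmid))
    (hf.mono_set (uIcc_subset_uIcc hmid right_mem_uIcc)), hreflect, two_smul]

lemma prod_range_odd_div_even_eq_centralBinom_div (m : ℕ) :
    ∏ i ∈ Finset.range m, (2 * (i : ℝ) + 1) / (2 * i + 2) = m.centralBinom / 4 ^ m := by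
  induction m with
  | zero => simp
  | succ k ih =>
    have hsucc : ((k + 1).centralBinom : ℝ) = 2 * (2 * k + 1) * k.centralBinom / (k + 1) := by
      rw [eq_div_iff (by positivity), mul_comm]
      exact_mod_cast Nat.succ_mul_centralBinom_succ k
    rw [Finset.prod_range_succ, ih, hsucc, pow_succ]
    field_simp
    ring

lemma integral_sin_pow_even_eq_centralBinom (m : ℕ) :
    ∫ θ in 0..π, sin θ ^ (2 * m) = π * m.centralBinom / 4 ^ m := by
  rw [integral_sin_pow_even, prod_range_odd_div_even_eq_centralBinom_div, mul_div_assoc]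

lemma integral_sin_pow_even_mul_cos_sq (m : ℕ) :
    ∫ θ in 0..π, sin θ ^ (2 * m) * cos θ ^ 2 = π * catalan m / (2 * 4 ^ m) := by
  have hsplit : ∀ θ, sin θ ^ (2 * m) * cos θ ^ 2 = sin θ ^ (2 * m) - sin θ ^ (2 * (m + 1)) := by
    intro θ; rw [cos_sq']; ring
  have hcont : ∀ k, IntervalIntegrable (fun θ => sin θ ^ k) volume 0 π :=
    fun k => (continuous_sin.pow k).intervalIntegrable _ _
  have hm : ((m : ℝ) + 1) ≠ 0 := by positivity
  have hcat : (catalan m : ℝ) = m.centralBinom / (m + 1) := by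
    rw [eq_div_iff hm, mul_comm]
    exact_mod_cast succ_mul_catalan_eq_centralBinom m
  have hsucc : ((m + 1).centralBinom : ℝ) = 2 * (2 * m + 1) * m.centralBinom / (m + 1) := by
    rw [eq_div_iff hm, mul_comm]
    exact_mod_cast Nat.succ_mul_centralBinom_succ m
  simp_rw [hsplit]
  rw [integral_sub (hcont _) (hcont _), integral_sin_pow_even_eq_centralBinom,
    integral_sin_pow_even_eq_centralBinom, hcat, hsucc, pow_succ]
  field_simp
  ring

lemma integral_sin_pow_even_mul_cos_sq_half (m : ℕ) :
    ∫ θ in 0..π / 2, sin θ ^ (2 * m) * cos θ ^ 2 = π * catalan m / 4 ^ (m + 1) := by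
  have h := integral_eq_two_smul_integral_half_of_symm
    (f := fun θ => sin θ ^ (2 * m) * cos θ ^ 2)
    (((continuous_sin.pow (2 * m)).mul (continuous_cos.pow 2)).intervalIntegrable 0 π)
    (fun θ => by simp only [sin_pi_sub, cos_pi_sub, neg_sq])
  rw [integral_sin_pow_even_mul_cos_sq, two_smul] at h
  rw [pow_succ]
  field_simp at h ⊢
  linarith

noncomputable def catalanDensity (x : ℝ) : ℝ := √((4 - x) / x) / (2 * π)

lemma pow_mul_catalanDensity_four_mul_sin_sq (m : ℕ) {θ : ℝ} (hθ : θ ∈ Ioc 0 (π / 2)) :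
    (4 * sin θ ^ 2) ^ m * catalanDensity (4 * sin θ ^ 2) * (8 * sin θ * cos θ) =
      4 ^ (m + 1) / π * (sin θ ^ (2 * m) * cos θ ^ 2) := by
  have hsin : 0 < sin θ := sin_pos_of_pos_of_lt_pi hθ.1 (by linarith [hθ.2, pi_pos])
  have hcos : 0 ≤ cos θ := cos_nonneg_of_mem_Icc ⟨by linarith [hθ.1, pi_pos], hθ.2⟩
  have hsqrt : √((4 - 4 * sin θ ^ 2) / (4 * sin θ ^ 2)) = cos θ / sin θ := by
    rw [← sqrt_sq (div_nonneg hcos hsin.le)]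
    congr 1
    field_simp
    rw [cos_sq']
  rw [catalanDensity, hsqrt]
  field_simp
  ring

theorem integral_pow_mul_catalanDensity (m : ℕ) :
    ∫ x in 0..4, x ^ m * catalanDensity x = catalan m := by
  have hsub := integral_comp_mul_deriv_of_deriv_nonneg (a := 0) (b := π / 2)
    (g := fun x => x ^ m * catalanDensity x) (f := fun θ => 4 * sin θ ^ 2)
    (f' := fun θ => 8 * sin θ * cos θ) (by fun_prop)
    (fun θ _ => by simpa using ((hasDerivAt_sin θ).pow 2).const_mul 4 |>.congr_deriv (by ring))
    (fun θ hθ => by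
      rw [min_eq_left (by positivity), max_eq_right (by positivity)] at hθ
      have := sin_nonneg_of_nonneg_of_le_pi hθ.1.le (by linarith [hθ.2, pi_pos])
      have := cos_nonneg_of_mem_Icc ⟨by linarith [hθ.1, pi_pos], hθ.2.le⟩
      positivity)
  norm_num [Function.comp_def] at hsub
  rw [← hsub, integral_congr_ae (ae_of_all _ fun θ hθ =>
      pow_mul_catalanDensity_four_mul_sin_sq m (by rwa [uIoc_of_le (by positivity)] at hθ)),
    intervalIntegral.integral_const_mul, integral_sin_pow_even_mul_cos_sq_half]
  field_simp

lemma catalanDensity_nonneg (x : ℝ) : 0 ≤ catalanDensity x := by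
  unfold catalanDensity; positivity

lemma catalan_ne_zero (n : ℕ) : catalan n ≠ 0 := fun h =>
  n.centralBinom_ne_zero (by rw [← succ_mul_catalan_eq_centralBinom, h, mul_zero])

noncomputable def catalanMeasure : Measure ℝ :=
  (volume.restrict (Ioc 0 4)).withDensity fun x => ENNReal.ofReal (catalanDensity x)

theorem integral_pow_catalanMeasure (n : ℕ) : ∫ x, x ^ n ∂catalanMeasure = catalan n := by
  rw [catalanMeasure, integral_withDensity_eq_integral_toReal_smul
    (by unfold catalanDensity; fun_prop) (ae_of_all _ fun _ => ENNReal.ofReal_lt_top),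
    ← integral_pow_mul_catalanDensity, integral_of_le (by norm_num)]
  simp only [ENNReal.toReal_ofReal (catalanDensity_nonneg _), smul_eq_mul, mul_comm]

theorem isMomentSeqOn_catalan : IsMomentSeqOn (Icc 0 4) (fun n => (catalan n : ℝ)) := by
  refine ⟨catalanMeasure, ?_, fun n => ⟨?_, (integral_pow_catalanMeasure n).symm⟩⟩
  · refine withDensity_absolutelyContinuous _ _ ?_
    rw [Measure.restrict_apply measurableSet_Icc.compl, inter_comm, ← sdiff_eq,
      sdiff_eq_empty.2 Ioc_subset_Icc_self, measure_empty]
  · exact Integrable.of_integral_ne_zero <| by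
      rw [integral_pow_catalanMeasure]; exact_mod_cast catalan_ne_zero n

open scoped NNReal in
theorem IsMomentSeqOn.comp_mul_add {a : ℝ} {y : ℕ → ℝ} (hy : IsMomentSeqOn (Icc 0 a) y)
    (d ℓ : ℕ) : IsMomentSeqOn (Icc 0 (a ^ d)) (fun n => y (d * n + ℓ)) := by
  obtain ⟨μ, hμ, hmom⟩ := hy
  have hpow : Measurable fun x : ℝ => x ^ d := by fun_prop
  have hdens : Measurable fun x : ℝ => ‖x‖₊ ^ ℓ := by fun_prop
  have hnonneg : ∀ᵐ x ∂μ, 0 ≤ x :=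
    ae_iff.2 <| measure_mono_null (fun _ hx hIcc => hx (mem_Icc.1 hIcc).1) hμ
  -- `‖x‖₊ ^ ℓ` is a nonnegative density agreeing with `x ^ ℓ` on the support of `μ`.
  have hmoment : ∀ n,
      (fun x => (‖x‖₊ ^ ℓ : ℝ≥0) • (x ^ d) ^ n) =ᵐ[μ] fun x => x ^ (d * n + ℓ) := by
    intro n
    filter_upwards [hnonneg] with x hx
    rw [NNReal.smul_def, NNReal.coe_pow, coe_nnnorm, norm_of_nonneg hx, smul_eq_mul, pow_add,
      pow_mul, mul_comm]
  refine ⟨(μ.withDensity fun x => (‖x‖₊ ^ ℓ : ℝ≥0)).map (· ^ d), ?_, fun n => ⟨?_, ?_⟩⟩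
  · rw [Measure.map_apply hpow measurableSet_Icc.compl]
    refine withDensity_absolutelyContinuous _ _ (measure_mono_null ?_ hμ)
    exact fun x hx hxa => hx ⟨pow_nonneg hxa.1 d, pow_le_pow_left₀ hxa.1 hxa.2 d⟩
  · rw [integrable_map_measure (continuous_pow n).aestronglyMeasurable hpow.aemeasurable,
      integrable_withDensity_iff_integrable_smul hdens]
    exact (hmom (d * n + ℓ)).1.congr (hmoment n).symm
  · rw [integral_map hpow.aemeasurable (continuous_pow n).aestronglyMeasurable,
      integral_withDensity_eq_integral_smul hdens, integral_congr_ae (hmoment n)]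
    exact (hmom (d * n + ℓ)).2

noncomputable def catalanPowDensity (d : ℕ) (u : ℝ) : ℝ :=
  u ^ ((1 - (d : ℝ)) / d) / (2 * d * π) * √((4 - u ^ ((1 : ℝ) / d)) / u ^ ((1 : ℝ) / d))

lemma catalanPowDensity_pow_mul_deriv {d : ℕ} (hd : d ≠ 0) {x : ℝ} (hx : 0 < x) :
    catalanPowDensity d (x ^ d) * (d * x ^ (d - 1)) = catalanDensity x := by
  have hd' : (d : ℝ) ≠ 0 := Nat.cast_ne_zero.2 hd
  have hroot : (x ^ d) ^ ((1 : ℝ) / d) = x := by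
    rw [← rpow_natCast, ← rpow_mul hx.le, mul_one_div_cancel hd', rpow_one]
  have hprefactor : (x ^ d) ^ ((1 - (d : ℝ)) / d) * x ^ (d - 1) = 1 := by
    rw [← rpow_natCast, ← rpow_mul hx.le, mul_div_cancel₀ _ hd', ← rpow_natCast,
      ← rpow_add hx, Nat.cast_sub (Nat.one_le_iff_ne_zero.2 hd), Nat.cast_one,
      sub_add_sub_cancel', sub_self, rpow_zero]
  rw [catalanPowDensity, catalanDensity, hroot]
  field_simp
  linear_combination √((4 - x) / x) * hprefactor

theorem integral_pow_mul_catalanPowDensity {d : ℕ} (hd : d ≠ 0) (n : ℕ) :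
    ∫ u in 0..4 ^ d, u ^ n * catalanPowDensity d u = catalan (d * n) := by
  have hsub := integral_comp_mul_deriv_of_deriv_nonneg (a := 0) (b := 4)
    (g := fun u => u ^ n * catalanPowDensity d u) (f := fun x => x ^ d)
    (f' := fun x => d * x ^ (d - 1)) (by fun_prop) (fun x _ => hasDerivAt_pow d x)
    (fun x hx => by
      rw [min_eq_left (by norm_num), max_eq_right (by norm_num)] at hx
      have := hx.1
      positivity)
  simp only [zero_pow hd, Function.comp_def] at hsub
  rw [← hsub, ← integral_pow_mul_catalanDensity]
  refine integral_congr_ae (ae_of_all _ fun x hx => ?_)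
  rw [uIoc_of_le (by norm_num)] at hx
  rw [mul_assoc, catalanPowDensity_pow_mul_deriv hd hx.1, ← pow_mul]

/-- for `d ≥ 1` and any `ℓ`, the subsequence `(C (d*n+ℓ))` of Catalan
numbers is a Hausdorff moment sequence supported in `[0, 4^d]`; in particular
`C (d*n) = ∫₀^{4^d} xⁿ · (x^((1−d)/d)/(2dπ))·√((4−x^(1/d))/x^(1/d)) dx`. -/
theorem catalan_subsequence_integral_repr (d ℓ : ℕ) (hd : 1 ≤ d) :
    IsMomentSeqOn (Set.Icc 0 ((4:ℝ) ^ d)) (fun n => (catalan (d * n + ℓ) : ℝ)) ∧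
    ∀ n : ℕ, (catalan (d * n) : ℝ) =
      ∫ x in (0:ℝ)..((4:ℝ) ^ d), x ^ n *
        (x ^ ((1 - (d:ℝ)) / d) / (2 * d * π) *
          Real.sqrt ((4 - x ^ ((1:ℝ) / d)) / x ^ ((1:ℝ) / d))) :=
  ⟨isMomentSeqOn_catalan.comp_mul_add d ℓ,
    fun n => (integral_pow_mul_catalanPowDensity (Nat.one_le_iff_ne_zero.1 hd) n).symm⟩
end
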